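/- arXiv:1901.09377 — 2 statements merged into one kernel-verified Lean document; each statement's English description precedes it below -/
import Mathlib

section
/- Let K be a field of characteristic zero, let n ≥ 1, and let f ∈ K(x, y_1, …, y_n). Suppose there is a finitely supported family of coefficients c : ℕ^{n+2} → K, not identically zero, such that Σ_{(k, j_0, j_1, …, j_n)} c_{k, j_0, …, j_n} · x^k · D_x^{j_0}(D_{y_1}^{j_1}(⋯ D_{y_n}^{j_n}(f)⋯)) = 0. Then there exist a natural number ρ, polynomials e_0, …, e_ρ ∈ K[x], not all zero, and rational functions g_1, …, g_n ∈ K(x, y_1, …, y_n) such that Σ_{j=0}^{ρ} e_j · D_x^j(f) = D_{y_1}(g_1) + ⋯ + D_{y_n}(g_n). -/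
/-!
Write `E = ∑ᵢ D_{yᵢ}(A)`. Since `u · D_{yᵢ} h + D_{yᵢ} u · h = D_{yᵢ}(u h)`, integration by
parts gives `u · ∂_y^j h ≡ (-1)^{|j|} ∂_y^j(u) · h (mod E)` for commuting derivations. Take `m`
minimal among the `y`-parts of the multi-indices in the support of `c`, and multiply the
annihilating relation by `y^m`: `∂_y^j (y^m)` vanishes as soon as some `jᵢ > mᵢ`, and equals `m!`
when `j = m`. As `x` and `D_x` commute with the `D_{yᵢ}`, what survives is `(-1)^{|m|} m!` times
`∑_{k,j} c (k, (j, m)) x^k D_x^j f`, which therefore lies in `E`; it is a telescoper, nonzero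
because `c (k, (j, m)) ≠ 0` for some `k, j`. The derivations commute because their brackets
vanish on the generators of the fraction field.
-/

open MvPolynomial

noncomputable section

namespace Derivation

variable {K A : Type*} [CommRing K] [CommRing A] [Algebra K A]

theorem iterate_mul_of_map_eq_zero (d : Derivation K A A) {u : A} (hu : d u = 0) (b : ℕ)
    (v : A) : (⇑d)^[b] (u * v) = u * (⇑d)^[b] v := by
  induction b generalizing v with
  | zero => rfl
  | succ b ih =>
    rw [Function.iterate_succ_apply, Function.iterate_succ_apply, leibniz, hu, smul_zero,
      add_zero, smul_eq_mul, ih]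

theorem iterate_pow_of_map_eq_one (d : Derivation K A A) {y : A} (hy : d y = 1) (a b : ℕ) :
    (⇑d)^[b] (y ^ a) = (a.descFactorial b : A) * y ^ (a - b) := by
  induction b with
  | zero => simp
  | succ b ih =>
    rw [Function.iterate_succ_apply', ih, leibniz, leibniz_pow, map_natCast, hy,
      Nat.descFactorial_succ, show a - (b + 1) = a - b - 1 by omega]
    simp only [smul_eq_mul, nsmul_eq_mul, mul_one]
    push_cast
    ring

theorem map_list_prod_eq_zero (d : Derivation K A A) {l : List A} (hl : ∀ u ∈ l, d u = 0) :
    d l.prod = 0 := by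
  induction l with
  | nil => exact d.map_one_eq_zero
  | cons u l ih =>
    rw [List.prod_cons, leibniz, hl u List.mem_cons_self,
      ih fun v hv => hl v (List.mem_cons_of_mem u hv), smul_zero, smul_zero, add_zero]

variable {ι : Type*}

def multiIterate (d : ι → Derivation K A A) (l : List ι) (j : ι → ℕ) (a : A) : A :=
  l.foldr (fun i acc => (⇑(d i))^[j i] acc) a

variable (d : ι → Derivation K A A)

@[simp]
theorem multiIterate_nil (j : ι → ℕ) (a : A) : multiIterate d [] j a = a := rfl

@[simp]
theorem multiIterate_cons (i : ι) (l : List ι) (j : ι → ℕ) (a : A) :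
    multiIterate d (i :: l) j a = (⇑(d i))^[j i] (multiIterate d l j a) := rfl

theorem commute_multiIterate {e : A → A} {l : List ι} (he : ∀ i ∈ l, Function.Commute e (d i))
    (j : ι → ℕ) : Function.Commute e (multiIterate d l j) := by
  induction l with
  | nil => exact fun _ => rfl
  | cons i l ih =>
    exact ((he i List.mem_cons_self).iterate_right (j i)).comp_right
      (ih fun k hk => he k (List.mem_cons_of_mem i hk))

theorem multiIterate_mul_of_map_eq_zero {l : List ι} {u : A} (hu : ∀ i ∈ l, d i u = 0)
    (j : ι → ℕ) (v : A) : multiIterate d l j (u * v) = u * multiIterate d l j v := by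
  induction l with
  | nil => rfl
  | cons i l ih =>
    rw [multiIterate_cons, multiIterate_cons, ih fun k hk => hu k (List.mem_cons_of_mem i hk),
      iterate_mul_of_map_eq_zero _ (hu i List.mem_cons_self)]

theorem multiIterate_finRange_succ {n : ℕ} (D : Fin (n + 1) → Derivation K A A)
    (hcomm : ∀ i k, Function.Commute ⇑(D i) ⇑(D k)) (j : Fin (n + 1) → ℕ) (a : A) :
    multiIterate D (List.finRange (n + 1)) j a =
      multiIterate (fun i => D i.succ) (List.finRange n) (Fin.tail j) ((⇑(D 0))^[j 0] a) := by
  rw [multiIterate, List.finRange_succ, List.foldr_cons, List.foldr_map]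
  exact commute_multiIterate (fun i => D i.succ) (fun i _ => (hcomm 0 i.succ).iterate_left (j 0))
    (Fin.tail j) a

theorem multiIterate_monomial [DecidableEq ι] {y : ι → A}
    (hy : ∀ i k, d i (y k) = if i = k then 1 else 0) {l : List ι} (hl : l.Nodup) (m j : ι → ℕ) :
    multiIterate d l j (l.map fun i => y i ^ m i).prod =
      (l.map fun i => ((m i).descFactorial (j i) : A) * y i ^ (m i - j i)).prod := by
  induction l with
  | nil => rfl
  | cons i l ih =>
    obtain ⟨hi, hl⟩ := List.nodup_cons.mp hl
    have hyi : ∀ k ∈ l, d k (y i ^ m i) = 0 := fun k hk => by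
      rw [leibniz_pow, hy, if_neg (ne_of_mem_of_not_mem hk hi), smul_zero, smul_zero]
    have hrest :
        d i (l.map fun k => ((m k).descFactorial (j k) : A) * y k ^ (m k - j k)).prod = 0 := by
      refine map_list_prod_eq_zero _ fun u hu => ?_
      obtain ⟨k, hk, rfl⟩ := List.mem_map.mp hu
      rw [leibniz, leibniz_pow, map_natCast, hy, if_neg (ne_of_mem_of_not_mem hk hi).symm]
      simp
    rw [List.map_cons, List.prod_cons, multiIterate_cons, multiIterate_mul_of_map_eq_zero d hyi,
      ih hl, List.map_cons, List.prod_cons, mul_comm, iterate_mul_of_map_eq_zero _ hrest,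
      iterate_pow_of_map_eq_one _ (by simpa using hy i i), mul_comm]

variable [Fintype ι]

def rangeSum : Submodule K A :=
  LinearMap.range (∑ i, (d i : A →ₗ[K] A) ∘ₗ LinearMap.proj i)

variable {d}

theorem mem_rangeSum {a : A} : a ∈ rangeSum d ↔ ∃ g : ι → A, ∑ i, d i (g i) = a := by
  simp [rangeSum]

theorem map_mem_rangeSum [DecidableEq ι] (i : ι) (z : A) : d i z ∈ rangeSum d :=
  mem_rangeSum.2 ⟨Pi.single i z, by
    rw [Finset.sum_eq_single i (fun k _ hk => by rw [Pi.single_eq_of_ne hk, map_zero])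
      (by simp), Pi.single_eq_same]⟩

theorem mul_smodEq_mul_of_map_eq_zero {u a b : A} (hu : ∀ i, d i u = 0)
    (h : a ≡ b [SMOD rangeSum d]) : u * a ≡ u * b [SMOD rangeSum d] := by
  obtain ⟨g, hg⟩ := mem_rangeSum.1 (SModEq.sub_mem.1 h)
  refine SModEq.sub_mem.2 (mem_rangeSum.2 ⟨fun i => u * g i, ?_⟩)
  simp only [← mul_sub, ← hg, Finset.mul_sum, leibniz, hu, smul_eq_mul, mul_zero, add_zero]

theorem mul_iterate_smodEq [DecidableEq ι] (i : ι) (b : ℕ) (u h : A) :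
    u * (⇑(d i))^[b] h ≡ (-1 : K) ^ b • ((⇑(d i))^[b] u * h) [SMOD rangeSum d] := by
  induction b generalizing u h with
  | zero => simp [SModEq.refl]
  | succ b ih =>
    have hstep : (⇑(d i))^[b] u * d i h ≡ -(d i ((⇑(d i))^[b] u) * h) [SMOD rangeSum d] := by
      refine SModEq.sub_mem.2 ?_
      rw [sub_neg_eq_add, mul_comm (d i _), ← smul_eq_mul, ← smul_eq_mul, ← leibniz]
      exact map_mem_rangeSum i _
    calc u * (⇑(d i))^[b + 1] h = u * (⇑(d i))^[b] (d i h) := by rw [Function.iterate_succ_apply]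
      _ ≡ (-1 : K) ^ b • ((⇑(d i))^[b] u * d i h) [SMOD rangeSum d] := ih u (d i h)
      _ ≡ (-1 : K) ^ b • -(d i ((⇑(d i))^[b] u) * h) [SMOD rangeSum d] := hstep.smul _
      _ = (-1 : K) ^ (b + 1) • ((⇑(d i))^[b + 1] u * h) := by
        rw [Function.iterate_succ_apply', pow_succ, mul_neg_one, neg_smul, smul_neg]

theorem mul_multiIterate_smodEq [DecidableEq ι] (hcomm : ∀ i k, Function.Commute ⇑(d i) ⇑(d k))
    (l : List ι) (j : ι → ℕ) (u h : A) :
    u * multiIterate d l j h ≡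
      (-1 : K) ^ (l.map j).sum • (multiIterate d l j u * h) [SMOD rangeSum d] := by
  induction l generalizing u with
  | nil => simp [SModEq.refl]
  | cons i l ih =>
    have hswap : multiIterate d l j ((⇑(d i))^[j i] u) = (⇑(d i))^[j i] (multiIterate d l j u) :=
      (commute_multiIterate d (fun k _ => (hcomm i k).iterate_left (j i)) j u).symm
    calc u * multiIterate d (i :: l) j h
        ≡ (-1 : K) ^ j i • ((⇑(d i))^[j i] u * multiIterate d l j h) [SMOD rangeSum d] :=
          mul_iterate_smodEq i (j i) u _
      _ ≡ (-1 : K) ^ j i • ((-1 : K) ^ (l.map j).sum •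
            (multiIterate d l j ((⇑(d i))^[j i] u) * h)) [SMOD rangeSum d] := (ih _).smul _
      _ = (-1 : K) ^ ((i :: l).map j).sum • (multiIterate d (i :: l) j u * h) := by
        rw [hswap, smul_smul, ← pow_add, List.map_cons, List.sum_cons, multiIterate_cons]

theorem monomial_mul_multiIterate_mem_rangeSum_of_lt [DecidableEq ι]
    (hcomm : ∀ i k, Function.Commute ⇑(d i) ⇑(d k)) {y : ι → A}
    (hy : ∀ i k, d i (y k) = if i = k then 1 else 0) {l : List ι} (hl : l.Nodup)
    {m j : ι → ℕ} (hlt : ∃ i ∈ l, m i < j i) (h : A) :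
    (l.map fun i => y i ^ m i).prod * multiIterate d l j h ∈ rangeSum d := by
  obtain ⟨i, hi, hlt⟩ := hlt
  have hzero : multiIterate d l j (l.map fun i => y i ^ m i).prod = 0 := by
    rw [multiIterate_monomial d hy hl]
    refine List.prod_eq_zero (List.mem_map.2 ⟨i, hi, ?_⟩)
    rw [Nat.descFactorial_eq_zero_iff_lt.2 hlt, Nat.cast_zero, zero_mul]
  simpa [hzero, SModEq.zero] using
    mul_multiIterate_smodEq hcomm l j (l.map fun i => y i ^ m i).prod h

theorem monomial_mul_multiIterate_self_smodEq [DecidableEq ι]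
    (hcomm : ∀ i k, Function.Commute ⇑(d i) ⇑(d k)) {y : ι → A}
    (hy : ∀ i k, d i (y k) = if i = k then 1 else 0) {l : List ι} (hl : l.Nodup)
    (m : ι → ℕ) (h : A) :
    (l.map fun i => y i ^ m i).prod * multiIterate d l m h ≡
      ((-1 : K) ^ (l.map m).sum * (l.map fun i => (m i).factorial).prod) • h
        [SMOD rangeSum d] := by
  have key := mul_multiIterate_smodEq hcomm l m (l.map fun i => y i ^ m i).prod h
  simp only [multiIterate_monomial d hy hl, Nat.descFactorial_self, Nat.sub_self, pow_zero,
    mul_one] at key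
  rwa [mul_smul, Nat.cast_smul_eq_nsmul, nsmul_eq_mul, Nat.cast_list_prod, List.map_map]

end Derivation

theorem Finset.exists_forall_eq_or_exists_lt {ι : Type*} [Finite ι] (s : Finset (ι → ℕ))
    (hs : s.Nonempty) : ∃ m ∈ s, ∀ v ∈ s, v = m ∨ ∃ i, m i < v i := by
  obtain ⟨m, hm, hmin⟩ := exists_minimal_of_wellFoundedLT (· ∈ s) hs
  refine ⟨m, hm, fun v hv => ?_⟩
  by_contra! h
  exact h.1 (le_antisymm h.2 (hmin hv h.2))

open Polynomial in
theorem Polynomial.exists_sum_aeval_mul_eq {K A α : Type*} [CommRing K] [CommRing A] [Algebra K A]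
    (x : A) (F : ℕ → A) (s : Finset α) (c : α → K) (a b : α → ℕ)
    (hab : Set.InjOn (fun q => (a q, b q)) s) (hc : ∃ q ∈ s, c q ≠ 0) :
    ∃ (ρ : ℕ) (e : Fin (ρ + 1) → K[X]), (∃ j, e j ≠ 0) ∧
      ∑ j : Fin (ρ + 1), aeval x (e j) * F j =
        ∑ q ∈ s, algebraMap K A (c q) * (x ^ a q * F (b q)) := by
  classical
  obtain ⟨q₀, hq₀, hcq₀⟩ := hc
  set E : ℕ → K[X] := fun j => ∑ q ∈ s with b q = j, C (c q) * X ^ a q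
  have hlt : ∀ q ∈ s, b q < s.sup b + 1 := fun q hq => Nat.lt_succ_of_le (Finset.le_sup hq)
  refine ⟨s.sup b, fun j => E j, ⟨⟨b q₀, hlt q₀ hq₀⟩, fun h => hcq₀ ?_⟩, ?_⟩
  · have hcoeff : (E (b q₀)).coeff (a q₀) = c q₀ := by
      rw [finsetSum_coeff, Finset.sum_eq_single q₀]
      · simp
      · intro q hq hne
        rw [coeff_C_mul_X_pow, if_neg]
        exact fun ha => hne (hab (Finset.mem_filter.1 hq).1 hq₀
          (Prod.ext ha.symm (Finset.mem_filter.1 hq).2))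
      · simp [hq₀]
    rw [← hcoeff]
    simpa using congrArg (coeff · (a q₀)) h
  · rw [Fin.sum_univ_eq_sum_range (fun j => aeval x (E j) * F j),
      ← Finset.sum_fiberwise_of_maps_to (g := b) (fun q hq => Finset.mem_range.2 (hlt q hq))]
    refine Finset.sum_congr rfl fun j _ => ?_
    rw [map_sum, Finset.sum_mul]
    refine Finset.sum_congr rfl fun q hq => ?_
    rw [(Finset.mem_filter.1 hq).2]
    simp [mul_assoc]

section Telescoper

open Derivation

variable {K A : Type*} [Field K] [CommRing A] [Algebra K A] {n : ℕ}
  {D : Fin (n + 1) → Derivation K A A} {x : A} {y : Fin n → A}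

theorem sum_filter_tail_eq_mem_rangeSum [CharZero K]
    (hcomm : ∀ i k, Function.Commute ⇑(D i) ⇑(D k)) (hx : ∀ i : Fin n, D i.succ x = 0)
    (hy : ∀ i k : Fin n, D i.succ (y k) = if i = k then 1 else 0)
    {f : A} {c : (ℕ × (Fin (n + 1) → ℕ)) →₀ K}
    (hann : ∑ p ∈ c.support, algebraMap K A (c p) *
      (x ^ p.1 * multiIterate D (List.finRange (n + 1)) p.2 f) = 0)
    {m : Fin n → ℕ} (hm : ∀ p ∈ c.support, Fin.tail p.2 = m ∨ ∃ i, m i < Fin.tail p.2 i) :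
    ∑ p ∈ c.support with Fin.tail p.2 = m, algebraMap K A (c p) * (x ^ p.1 * (⇑(D 0))^[p.2 0] f)
      ∈ rangeSum fun i : Fin n => D i.succ := by
  classical
  set Y := ((List.finRange n).map fun i => y i ^ m i).prod
  set κ : K := (-1) ^ ((List.finRange n).map m).sum *
    ((List.finRange n).map fun i => (m i).factorial).prod
  have hκ : κ ≠ 0 := mul_ne_zero (pow_ne_zero _ (neg_ne_zero.2 one_ne_zero))
    (Nat.cast_ne_zero.2 (List.prod_ne_zero (by simp [Nat.factorial_ne_zero])))
  have hterm : ∀ p ∈ c.support,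
      Y * (algebraMap K A (c p) * (x ^ p.1 * multiIterate D (List.finRange (n + 1)) p.2 f)) ≡
        if Fin.tail p.2 = m then κ • (algebraMap K A (c p) * (x ^ p.1 * (⇑(D 0))^[p.2 0] f))
        else 0 [SMOD rangeSum fun i : Fin n => D i.succ] := by
    intro p hp
    set h := (⇑(D 0))^[p.2 0] f
    have hu : ∀ i : Fin n, D i.succ (algebraMap K A (c p) * x ^ p.1) = 0 := fun i => by
      simp [leibniz, leibniz_pow, hx]
    have hcomm' : ∀ i k : Fin n, Function.Commute ⇑(D i.succ) ⇑(D k.succ) := fun i k => hcomm _ _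
    calc Y * (algebraMap K A (c p) * (x ^ p.1 * multiIterate D (List.finRange (n + 1)) p.2 f))
        = (algebraMap K A (c p) * x ^ p.1) *
            (Y * multiIterate (fun i => D i.succ) (List.finRange n) (Fin.tail p.2) h) := by
          rw [multiIterate_finRange_succ D hcomm]; ring
      _ ≡ (algebraMap K A (c p) * x ^ p.1) * (if Fin.tail p.2 = m then κ • h else 0)
          [SMOD rangeSum fun i : Fin n => D i.succ] := by
          refine mul_smodEq_mul_of_map_eq_zero hu ?_
          split_ifs with htail
          · rw [htail]
            exact monomial_mul_multiIterate_self_smodEq hcomm' hy (List.nodup_finRange n) m h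
          · obtain ⟨i, hi⟩ := (hm p hp).resolve_left htail
            exact SModEq.zero.2 (monomial_mul_multiIterate_mem_rangeSum_of_lt hcomm' hy
              (List.nodup_finRange n) ⟨i, List.mem_finRange i, hi⟩ h)
      _ = _ := by split_ifs <;> simp [mul_assoc]
  have hsum := SModEq.sum hterm
  rw [← Finset.mul_sum, hann, mul_zero, ← Finset.sum_filter, ← Finset.smul_sum] at hsum
  exact (Submodule.smul_mem_iff _ hκ).1 (SModEq.zero.1 hsum.symm)

theorem exists_telescoper_of_annihilator [CharZero K]
    (hcomm : ∀ i k, Function.Commute ⇑(D i) ⇑(D k)) (hx : ∀ i : Fin n, D i.succ x = 0)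
    (hy : ∀ i k : Fin n, D i.succ (y k) = if i = k then 1 else 0)
    (f : A) {c : (ℕ × (Fin (n + 1) → ℕ)) →₀ K} (hc : c ≠ 0)
    (hann : ∑ p ∈ c.support, algebraMap K A (c p) *
      (x ^ p.1 * multiIterate D (List.finRange (n + 1)) p.2 f) = 0) :
    ∃ (ρ : ℕ) (e : Fin (ρ + 1) → Polynomial K), (∃ j, e j ≠ 0) ∧
      ∃ g : Fin n → A, ∑ j : Fin (ρ + 1), Polynomial.aeval x (e j) * (⇑(D 0))^[(j : ℕ)] f =
        ∑ i : Fin n, D i.succ (g i) := by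
  classical
  obtain ⟨m, hm, hmin⟩ := (c.support.image fun p => Fin.tail p.2).exists_forall_eq_or_exists_lt
    ((Finsupp.support_nonempty_iff.2 hc).image _)
  obtain ⟨p₀, hp₀, rfl⟩ := Finset.mem_image.1 hm
  obtain ⟨g, hg⟩ := mem_rangeSum.1 (sum_filter_tail_eq_mem_rangeSum hcomm hx hy hann
    fun p hp => hmin _ (Finset.mem_image_of_mem _ hp))
  have hinj : Set.InjOn (fun p : ℕ × (Fin (n + 1) → ℕ) => (p.1, p.2 0))
      ↑(c.support.filter fun p => Fin.tail p.2 = Fin.tail p₀.2) := by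
    intro p hp q hq hpq
    simp only [Finset.mem_coe, Finset.mem_filter, Prod.mk.injEq] at hp hq hpq
    refine Prod.ext hpq.1 ?_
    rw [← Fin.cons_self_tail p.2, ← Fin.cons_self_tail q.2, hpq.2, hp.2, hq.2]
  obtain ⟨ρ, e, he, hsum⟩ := Polynomial.exists_sum_aeval_mul_eq x (fun j => (⇑(D 0))^[j] f) _
    c Prod.fst (fun p => p.2 0) hinj
    ⟨p₀, Finset.mem_filter.2 ⟨hp₀, rfl⟩, Finsupp.mem_support_iff.1 hp₀⟩
  exact ⟨ρ, e, he, g, hsum.trans hg.symm⟩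

end Telescoper

theorem Derivation.eq_zero_of_isFractionRing {K R L : Type*} [CommRing K] [CommRing R] [Field L]
    [Algebra R L] [IsFractionRing R L] [Algebra K R] [Algebra K L] [IsScalarTower K R L]
    (d : Derivation K L L) (h : ∀ r, d (algebraMap R L r) = 0) : d = 0 := by
  ext z
  obtain ⟨a, b, -, rfl⟩ := IsFractionRing.div_surjective R z
  simp [leibniz_div, h]

theorem MvPolynomial.commute_of_derivation_X {K σ : Type*} [Field K] [DecidableEq σ]
    (D : σ → Derivation K (FractionRing (MvPolynomial σ K)) (FractionRing (MvPolynomial σ K)))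
    (hD : ∀ i j, D i (algebraMap (MvPolynomial σ K) _ (X j)) = if i = j then 1 else 0) (i k : σ) :
    Function.Commute ⇑(D i) ⇑(D k) := by
  have hbracket : ⁅D i, D k⁆ = 0 := by
    refine Derivation.eq_zero_of_isFractionRing (R := MvPolynomial σ K) _ fun r => ?_
    have : ⁅D i, D k⁆.compAlgebraMap (MvPolynomial σ K) = 0 :=
      MvPolynomial.derivation_ext fun j => by
        simp [Derivation.commutator_apply, hD, apply_ite]
    exact congrArg (· r) this
  intro a
  simpa [Derivation.commutator_apply, sub_eq_zero] using congrArg (· a) hbracket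

theorem telescopers_from_annihilator_differential_case_general
    (K : Type*) [Field K] [CharZero K] (n : ℕ)
    (D : Fin (n + 1) → Derivation K (FractionRing (MvPolynomial (Fin (n + 1)) K))
      (FractionRing (MvPolynomial (Fin (n + 1)) K)))
    (hD : ∀ i j : Fin (n + 1),
      D i (algebraMap (MvPolynomial (Fin (n + 1)) K)
        (FractionRing (MvPolynomial (Fin (n + 1)) K)) (X j)) = if i = j then 1 else 0)
    (f : FractionRing (MvPolynomial (Fin (n + 1)) K))
    (c : (ℕ × (Fin (n + 1) → ℕ)) →₀ K) (hc : c ≠ 0)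
    (hann : ∑ p ∈ c.support,
        algebraMap K (FractionRing (MvPolynomial (Fin (n + 1)) K)) (c p) *
          ((algebraMap (MvPolynomial (Fin (n + 1)) K)
              (FractionRing (MvPolynomial (Fin (n + 1)) K)) (X 0)) ^ p.1 *
            (List.finRange (n + 1)).foldr
              (fun i acc => (fun a => D i a)^[p.2 i] acc) f) = 0) :
    ∃ (ρ : ℕ) (e : Fin (ρ + 1) → Polynomial K),
      (∃ j, e j ≠ 0) ∧
      ∃ g : Fin n → FractionRing (MvPolynomial (Fin (n + 1)) K),
        ∑ j : Fin (ρ + 1),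
            Polynomial.aeval (algebraMap (MvPolynomial (Fin (n + 1)) K)
                (FractionRing (MvPolynomial (Fin (n + 1)) K)) (X 0)) (e j) *
              (fun a => D 0 a)^[(j : ℕ)] f
          = ∑ i : Fin n, D i.succ (g i) := by
  refine exists_telescoper_of_annihilator (MvPolynomial.commute_of_derivation_X D hD)
    (fun i => ?_) (y := fun k => algebraMap (MvPolynomial (Fin (n + 1)) K) _ (X k.succ))
    (fun i k => ?_) f hc hann
  · simpa [Fin.succ_ne_zero] using hD i.succ 0
  · simpa [Fin.succ_inj] using hD i.succ k.succ

/-- **From annihilating operators to telescopers (differential case).**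
Let `K` be a field of characteristic zero, `n ≥ 1`, and `f ∈ K(x, y₁, …, yₙ)`
(the fraction field of `K[x, y₁, …, yₙ]`, with `x` the variable of index `0`).
Let `D i` be the partial derivation with respect to the `i`-th variable.
Suppose there is a finitely supported, not identically zero, family of coefficients
`c : ℕ × (Fin (n+1) → ℕ) →₀ K` such that
`∑_{(k, j)} c (k, j) · x^k · D₀^{j 0}(D₁^{j 1}(⋯ Dₙ^{j n}(f)⋯)) = 0`.
Then there exist `ρ : ℕ`, polynomials `e 0, …, e ρ ∈ K[x]`, not all zero,
and rational functions `g 1, …, g n` such that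
`∑ j, e j • D_x^j f = D_{y₁} (g 1) + ⋯ + D_{yₙ} (g n)`. -/
theorem telescopers_from_annihilator_differential_case
    (K : Type*) [Field K] [CharZero K] (n : ℕ) (hn : 1 ≤ n)
    (D : Fin (n + 1) → Derivation K (FractionRing (MvPolynomial (Fin (n + 1)) K))
      (FractionRing (MvPolynomial (Fin (n + 1)) K)))
    (hD : ∀ i j : Fin (n + 1),
      D i (algebraMap (MvPolynomial (Fin (n + 1)) K)
        (FractionRing (MvPolynomial (Fin (n + 1)) K)) (X j)) = if i = j then 1 else 0)
    (f : FractionRing (MvPolynomial (Fin (n + 1)) K))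
    (c : (ℕ × (Fin (n + 1) → ℕ)) →₀ K) (hc : c ≠ 0)
    (hann : ∑ p ∈ c.support,
        algebraMap K (FractionRing (MvPolynomial (Fin (n + 1)) K)) (c p) *
          ((algebraMap (MvPolynomial (Fin (n + 1)) K)
              (FractionRing (MvPolynomial (Fin (n + 1)) K)) (X 0)) ^ p.1 *
            (List.finRange (n + 1)).foldr
              (fun i acc => (fun a => D i a)^[p.2 i] acc) f) = 0) :
    ∃ (ρ : ℕ) (e : Fin (ρ + 1) → Polynomial K),
      (∃ j, e j ≠ 0) ∧
      ∃ g : Fin n → FractionRing (MvPolynomial (Fin (n + 1)) K),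
        ∑ j : Fin (ρ + 1),
            Polynomial.aeval (algebraMap (MvPolynomial (Fin (n + 1)) K)
                (FractionRing (MvPolynomial (Fin (n + 1)) K)) (X 0)) (e j) *
              (fun a => D 0 a)^[(j : ℕ)] f
          = ∑ i : Fin n, D i.succ (g i) :=
  telescopers_from_annihilator_differential_case_general K n D hD f c hc hann
end
end

section
/- Let K be a field of characteristic zero. Let a ∈ K(x)[y,z] (an element of K(x,y,z) that is polynomial in y and z with coefficients in K(x)) and let b ∈ K[x,y,z] be nonzero such that σ_x^m(b) = c·σ_y^n(b) for some c ∈ K∖{0} and integers m, n with m > 0. Then a/b has a telescoper of type (S_x, Δ_y, D_z). -/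
open MvPolynomial

noncomputable section

/-- The field `K(x,y,z)` of rational functions in three variables over `K`,
realized as the fraction field of `K[x,y,z]` (`x`, `y`, `z` have indices `0`, `1`, `2`). -/
abbrev F3 (K : Type*) [Field K] := FractionRing (MvPolynomial (Fin 3) K)

/-- The canonical image of a polynomial in `K(x,y,z)`. -/
def toF3 (K : Type*) [Field K] (p : MvPolynomial (Fin 3) K) : F3 K :=
  algebraMap (MvPolynomial (Fin 3) K) (F3 K) p

/-- The rational function `x`. -/
def xv (K : Type*) [Field K] : F3 K := toF3 K (X 0)

/-- The rational function `y`. -/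
def yv (K : Type*) [Field K] : F3 K := toF3 K (X 1)

/-- The rational function `z`. -/
def zv (K : Type*) [Field K] : F3 K := toF3 K (X 2)

/-- `a` is an element of `K(x,y)[z]` (polynomial in `z` with coefficients in `K(x,y)`)
whose degree in `z` is `< N`: it can be written as `p/q` with `q ∈ K[x,y] \ {0}` and
`deg_z p < N`. -/
def MemKxyPolyZLt (K : Type*) [Field K] (a : F3 K) (N : ℕ) : Prop :=
  ∃ p q : MvPolynomial (Fin 3) K, q ≠ 0 ∧
    q ∈ MvPolynomial.supported K ({0, 1} : Set (Fin 3)) ∧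
    p.degreeOf 2 < N ∧ a = toF3 K p / toF3 K q

/-- The image of `d ∈ K[x,y,z]` as a polynomial in `z` over the field `K(x,y)`
(sending `x`, `y` to the corresponding rational functions and `z` to the
polynomial variable). -/
def toPolyZ (K : Type*) [Field K] :
    MvPolynomial (Fin 3) K →ₐ[K] Polynomial (FractionRing (MvPolynomial (Fin 2) K)) :=
  MvPolynomial.aeval
    ![Polynomial.C (algebraMap (MvPolynomial (Fin 2) K)
        (FractionRing (MvPolynomial (Fin 2) K)) (X 0)),
      Polynomial.C (algebraMap (MvPolynomial (Fin 2) K)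
        (FractionRing (MvPolynomial (Fin 2) K)) (X 1)),
      Polynomial.X]

/-- `f` is `(Δ_y, D_z)`-exact: `f = Δ_y g + D_z h` for some `g, h ∈ K(x,y,z)`. -/
def ExactΔyDz (K : Type*) [Field K] (σy : F3 K ≃ₐ[K] F3 K)
    (Dz : Derivation K (F3 K) (F3 K)) (f : F3 K) : Prop :=
  ∃ g h : F3 K, f = (σy g - g) + Dz h

/-- `f` has a telescoper of type `(S_x, Δ_y, D_z)`: there are `e 0, …, e ρ ∈ K(x)`,
not all zero, and `g, h ∈ K(x,y,z)` with `∑ i, e i · σ_x^i f = Δ_y g + D_z h`. -/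
def HasTelescoperSxΔyDz (K : Type*) [Field K] (σx σy : F3 K ≃ₐ[K] F3 K)
    (Dz : Derivation K (F3 K) (F3 K)) (f : F3 K) : Prop :=
  ∃ (ρ : ℕ) (e : Fin (ρ + 1) → F3 K),
    (∀ i, e i ∈ IntermediateField.adjoin K {xv K}) ∧ (∃ i, e i ≠ 0) ∧
    ∃ g h : F3 K,
      ∑ i : Fin (ρ + 1), e i * (σx ^ (i : ℕ)) f = (σy g - g) + Dz h

/-!
Write `a = p / q` with `q ∈ K[x]` and put `τ = σ_y^(-n) σ_x^m`, so that `τ b = c b`. Since `τ` maps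
`K(x)` into itself, shifts `y` by a constant and fixes `z`, it preserves the finite-dimensional
`K(x)`-span of the monomials `y^i z^j` with `i ≤ deg_y p`, `j ≤ deg_z p`, which contains `a`. Hence
the numerators `τ^k a` satisfy a nontrivial relation `∑ g_k τ^k a = 0` over `K(x)`, and dividing by
`τ^k b = c^k b` gives `∑ g_k c^k τ^k (a / b) = 0`. As `σ_x^(mk) = σ_y^(nk) τ^k` and `σ_y` fixes
`K(x)`, each `g_k c^k σ_x^(mk) (a / b)` differs from `g_k c^k τ^k (a / b)` by a `Δ_y`-difference, so
`∑ g_k c^k S_x^(mk)` is a telescoper with zero `D_z`-part.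
-/

open IntermediateField

section Automorphisms

variable {R A : Type*} [CommSemiring R] [Ring A] [Algebra R A]

theorem AlgEquiv.zpow_apply_of_apply_eq_self {σ : A ≃ₐ[R] A} {v : A} (h : σ v = v) (j : ℤ) :
    (σ ^ j) v = v :=
  (MulAction.stabilizer (A ≃ₐ[R] A) v).zpow_mem h j

theorem AlgEquiv.zpow_apply_of_apply_eq_add_one {σ : A ≃ₐ[R] A} {v : A} (h : σ v = v + 1)
    (j : ℤ) : (σ ^ j) v = v + j := by
  have hinv : σ⁻¹ v = v - 1 := by
    rw [AlgEquiv.aut_inv, AlgEquiv.symm_apply_eq, map_sub, h, map_one, add_sub_cancel_right]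
  induction j using Int.induction_on with
  | zero => simp
  | succ k ih =>
    rw [zpow_add_one, AlgEquiv.mul_apply, h, map_add, map_one, ih]; push_cast; abel
  | pred k ih =>
    rw [zpow_sub_one, AlgEquiv.mul_apply, hinv, map_sub, map_one, ih]; push_cast; abel

theorem AlgEquiv.pow_apply_of_apply_eq_smul {σ : A ≃ₐ[R] A} {v : A} {c : R} (h : σ v = c • v)
    (k : ℕ) : (σ ^ k) v = c ^ k • v := by
  induction k with
  | zero => simp
  | succ k ih => rw [pow_succ, AlgEquiv.mul_apply, h, map_smul, ih, smul_smul, pow_succ']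

theorem AlgEquiv.exists_pow_apply_sub_eq (σ : A ≃ₐ[R] A) (w : A) (k : ℕ) :
    ∃ g, (σ ^ k) w - w = σ g - g := by
  refine ⟨∑ i ∈ Finset.range k, (σ ^ i) w, ?_⟩
  simp_rw [map_sum, ← Finset.sum_sub_distrib, ← AlgEquiv.mul_apply, ← pow_succ']
  rw [Finset.sum_range_sub (fun i => (σ ^ i) w), pow_zero, AlgEquiv.one_apply]

theorem AlgEquiv.exists_zpow_apply_sub_eq (σ : A ≃ₐ[R] A) (w : A) (j : ℤ) :
    ∃ g, (σ ^ j) w - w = σ g - g := by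
  obtain ⟨k, rfl | rfl⟩ := Int.eq_nat_or_neg j
  · simpa using σ.exists_pow_apply_sub_eq w k
  · obtain ⟨g, hg⟩ := σ.exists_pow_apply_sub_eq ((σ ^ (-(k : ℤ))) w) k
    refine ⟨-g, ?_⟩
    rw [← zpow_natCast, ← AlgEquiv.mul_apply, ← zpow_add, add_neg_cancel, zpow_zero,
      AlgEquiv.one_apply] at hg
    rw [map_neg, ← neg_sub, hg]; abel

end Automorphisms

section AdjoinSimple

variable {K L : Type*} [Field K] [Field L] [Algebra K L]

theorem AlgEquiv.apply_eq_self_of_mem_adjoin_simple {σ : L ≃ₐ[K] L} {α u : L} (hα : σ α = α)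
    (hu : u ∈ K⟮α⟯) : σ u = u :=
  DFunLike.congr_fun (adjoin_algHom_ext K (φ₁ := (σ : L →ₐ[K] L).comp K⟮α⟯.val)
    (φ₂ := K⟮α⟯.val) (by simpa using hα)) ⟨u, hu⟩

theorem AlgEquiv.apply_mem_adjoin_simple {σ : L ≃ₐ[K] L} {α u : L} (hα : σ α ∈ K⟮α⟯)
    (hu : u ∈ K⟮α⟯) : σ u ∈ K⟮α⟯ := by
  have : K⟮α⟯.map (σ : L →ₐ[K] L) ≤ K⟮α⟯ := by
    rw [adjoin_map, Set.image_singleton]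
    exact adjoin_simple_le_iff.mpr hα
  exact this ⟨u, hu, rfl⟩

end AdjoinSimple

section Span

variable {K L : Type*} [Field K] [Field L] [Algebra K L]

theorem exists_nontrivial_relation_of_finrank_lt {F M : Type*} [Field F] [AddCommGroup M]
    [Module F M] (W : Submodule F M) [FiniteDimensional F W] {ι : Type*} [Fintype ι]
    (hcard : Module.finrank F W < Fintype.card ι) {w : ι → M} (hw : ∀ i, w i ∈ W) :
    ∃ g : ι → F, ∑ i, g i • w i = 0 ∧ ∃ i, g i ≠ 0 := by
  have : ¬ LinearIndependent F (fun i => (⟨w i, hw i⟩ : W)) := fun hli =>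
    hli.fintype_card_le_finrank.not_gt hcard
  obtain ⟨g, hg, i, hi⟩ := Fintype.not_linearIndependent_iff.mp this
  exact ⟨g, by simpa using congrArg Subtype.val hg, i, hi⟩

theorem mapsTo_span_of_ringHom {E : IntermediateField K L} {τ : L →+* L}
    (hE : ∀ r ∈ E, τ r ∈ E) {S : Set L} (hS : ∀ s ∈ S, τ s ∈ Submodule.span E S) :
    Set.MapsTo τ (Submodule.span E S) (Submodule.span E S) := by
  intro w hw
  induction hw using Submodule.span_induction with
  | mem s hs => exact hS s hs
  | zero => simp
  | add u v _ _ hu hv => rw [map_add]; exact add_mem hu hv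
  | smul r u _ hu =>
    change τ (r * u) ∈ _
    rw [map_mul]
    exact Submodule.smul_mem _ (⟨τ r, hE r r.2⟩ : E) hu

variable (E : IntermediateField K L) (u v : L) (d e : ℕ)

def monomialSpan : Submodule E L :=
  Submodule.span E (Set.image2 (fun i j => u ^ i * v ^ j) (Set.Iic d) (Set.Iic e))

instance : FiniteDimensional E (monomialSpan E u v d e) :=
  FiniteDimensional.span_of_finite E ((Set.finite_Iic d).image2 _ (Set.finite_Iic e))

variable {E u v d e}

theorem pow_mul_pow_mem_monomialSpan {i j : ℕ} (hi : i ≤ d) (hj : j ≤ e) :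
    u ^ i * v ^ j ∈ monomialSpan E u v d e :=
  Submodule.subset_span ⟨i, hi, j, hj, rfl⟩

theorem add_pow_mul_pow_mem_monomialSpan {ν : L} (hν : ν ∈ E) {i j : ℕ} (hi : i ≤ d)
    (hj : j ≤ e) : (u + ν) ^ i * v ^ j ∈ monomialSpan E u v d e := by
  rw [add_pow, Finset.sum_mul]
  refine Submodule.sum_mem _ fun t ht => ?_
  have hcoeff : ν ^ (i - t) * (i.choose t : L) ∈ E :=
    mul_mem (pow_mem hν _) (IntermediateField.natCast_mem E _)
  have hterm : u ^ t * ν ^ (i - t) * (i.choose t : L) * v ^ j =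
      (⟨_, hcoeff⟩ : E) • (u ^ t * v ^ j) := by
    rw [Algebra.smul_def, IntermediateField.algebraMap_apply]; ring
  rw [hterm]
  exact Submodule.smul_mem _ _ (pow_mul_pow_mem_monomialSpan
    ((Nat.lt_succ_iff.mp (Finset.mem_range.mp ht)).trans hi) hj)

theorem mapsTo_monomialSpan {τ : L →+* L} (hE : ∀ r ∈ E, τ r ∈ E) (hu : τ u - u ∈ E)
    (hv : τ v = v) : Set.MapsTo τ (monomialSpan E u v d e) (monomialSpan E u v d e) := by
  refine mapsTo_span_of_ringHom hE ?_
  rintro _ ⟨i, hi, j, hj, rfl⟩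
  rw [map_mul, map_pow, map_pow, hv, ← add_sub_cancel u (τ u)]
  exact add_pow_mul_pow_mem_monomialSpan hu hi hj

end Span

theorem FractionRing.mvPolynomial_algHom_ext {K L ι : Type*} [Field K] [Semiring L]
    [Algebra K L] {φ ψ : FractionRing (MvPolynomial ι K) →ₐ[K] L}
    (h : ∀ i, φ (algebraMap _ _ (X i : MvPolynomial ι K)) =
      ψ (algebraMap _ _ (X i : MvPolynomial ι K))) : φ = ψ := by
  have hpoly : φ.comp (IsScalarTower.toAlgHom K _ _) = ψ.comp (IsScalarTower.toAlgHom K _ _) :=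
    MvPolynomial.algHom_ext h
  exact AlgHom.coe_ringHom_injective <| IsLocalization.ringHom_ext
    (nonZeroDivisors (MvPolynomial ι K)) <| RingHom.ext fun p => DFunLike.congr_fun hpoly p

section RationalFunctions

variable {K : Type*} [Field K]

theorem toF3_mem_adjoin_xv {q : MvPolynomial (Fin 3) K} (hq : q ∈ supported K {0}) :
    toF3 K q ∈ K⟮xv K⟯ := by
  have : (supported K ({0} : Set (Fin 3))).map (IsScalarTower.toAlgHom K _ (F3 K)) ≤
      K⟮xv K⟯.toSubalgebra := by
    rw [supported_eq_adjoin_X, AlgHom.map_adjoin, ← Set.image_comp, Set.image_singleton]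
    exact algebra_adjoin_le_adjoin K _
  exact this ⟨q, hq, rfl⟩

theorem toF3_mem_monomialSpan (r : MvPolynomial (Fin 3) K) :
    toF3 K r ∈ monomialSpan K⟮xv K⟯ (yv K) (zv K) (r.degreeOf 1) (r.degreeOf 2) := by
  rw [← congrArg (toF3 K) r.support_sum_monomial_coeff, toF3, map_sum]
  refine Submodule.sum_mem _ fun s hs => ?_
  have hcoeff : algebraMap K (F3 K) (r.coeff s) * xv K ^ s 0 ∈ K⟮xv K⟯ :=
    mul_mem (IntermediateField.algebraMap_mem _ _) (pow_mem (mem_adjoin_simple_self K _) _)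
  have hmonomial : algebraMap _ (F3 K) (monomial s (r.coeff s)) =
      (⟨_, hcoeff⟩ : K⟮xv K⟯) • (yv K ^ s 1 * zv K ^ s 2) := by
    rw [Algebra.smul_def, IntermediateField.algebraMap_apply, monomial_eq, Finsupp.prod_pow,
      Fin.prod_univ_three, map_mul, map_mul, map_mul, map_pow, map_pow, map_pow,
      ← MvPolynomial.algebraMap_eq, ← IsScalarTower.algebraMap_apply]
    simp only [xv, yv, zv, toF3]
    ring
  rw [hmonomial]
  exact Submodule.smul_mem _ _ (pow_mul_pow_mem_monomialSpan
    (monomial_le_degreeOf 1 hs) (monomial_le_degreeOf 2 hs))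

theorem commute_of_shifts {σx σy : F3 K ≃ₐ[K] F3 K}
    (hσx1 : σx (xv K) = xv K + 1) (hσx2 : σx (yv K) = yv K) (hσx3 : σx (zv K) = zv K)
    (hσy1 : σy (xv K) = xv K) (hσy2 : σy (yv K) = yv K + 1) (hσy3 : σy (zv K) = zv K) :
    Commute σx σy := by
  refine AlgEquiv.coe_toAlgHom_injective (FractionRing.mvPolynomial_algHom_ext fun i => ?_)
  fin_cases i
  · exact show σx (σy (xv K)) = σy (σx (xv K)) by rw [hσy1, hσx1, map_add, map_one, hσy1]
  · exact show σx (σy (yv K)) = σy (σx (yv K)) by rw [hσy2, map_add, map_one, hσx2, hσy2]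
  · exact show σx (σy (zv K)) = σy (σx (zv K)) by rw [hσy3, hσx3, hσy3]

end RationalFunctions

section Telescoper

variable {K : Type*} [Field K]

theorem exists_zpow_mul_of_shifts {σx σy : F3 K ≃ₐ[K] F3 K}
    (hσx1 : σx (xv K) = xv K + 1) (hσx2 : σx (yv K) = yv K) (hσx3 : σx (zv K) = zv K)
    (hσy1 : σy (xv K) = xv K) (hσy2 : σy (yv K) = yv K + 1) (hσy3 : σy (zv K) = zv K)
    (m : ℕ) (n : ℤ) :
    ∃ τ : F3 K ≃ₐ[K] F3 K, σx ^ m = σy ^ n * τ ∧ Commute (σy ^ n) τ ∧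
      τ (xv K) = xv K + m ∧ τ (yv K) = yv K - n ∧ τ (zv K) = zv K := by
  have hcomm := commute_of_shifts hσx1 hσx2 hσx3 hσy1 hσy2 hσy3
  refine ⟨σy ^ (-n) * σx ^ m, by rw [zpow_neg, mul_inv_cancel_left],
    (Commute.zpow_zpow_self σy n (-n)).mul_right ((hcomm.pow_left m).zpow_right n).symm, ?_⟩
  simp only [AlgEquiv.mul_apply, ← zpow_natCast σx, map_add, map_intCast,
    AlgEquiv.zpow_apply_of_apply_eq_add_one, AlgEquiv.zpow_apply_of_apply_eq_self, hσx1, hσx2,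
    hσx3, hσy1, hσy2, hσy3]
  push_cast
  exact ⟨rfl, (sub_eq_add_neg _ _).symm, trivial⟩

theorem exists_nontrivial_relation_pow_apply {τ : F3 K ≃ₐ[K] F3 K}
    (hx : τ (xv K) ∈ K⟮xv K⟯) (hy : τ (yv K) - yv K ∈ K⟮xv K⟯) (hz : τ (zv K) = zv K)
    (p : MvPolynomial (Fin 3) K) {q : MvPolynomial (Fin 3) K} (hq : q ∈ supported K {0}) :
    ∃ (N : ℕ) (g : Fin (N + 1) → K⟮xv K⟯), (∃ k, g k ≠ 0) ∧
      ∑ k, (g k : F3 K) * (τ ^ (k : ℕ)) (toF3 K p / toF3 K q) = 0 := by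
  let W := monomialSpan K⟮xv K⟯ (yv K) (zv K) (p.degreeOf 1) (p.degreeOf 2)
  have haW : toF3 K p / toF3 K q ∈ W := by
    rw [div_eq_inv_mul]
    exact W.smul_mem (⟨_, inv_mem (toF3_mem_adjoin_xv hq)⟩ : K⟮xv K⟯) (toF3_mem_monomialSpan p)
  have hτW : Set.MapsTo τ W W :=
    mapsTo_monomialSpan (τ := (τ : F3 K →+* F3 K))
      (fun _ => AlgEquiv.apply_mem_adjoin_simple hx) hy hz
  obtain ⟨g, hg, hne⟩ := exists_nontrivial_relation_of_finrank_lt W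
    (ι := Fin (Module.finrank K⟮xv K⟯ W + 1)) (by simp)
    (w := fun k => (τ ^ (k : ℕ)) (toF3 K p / toF3 K q))
    fun k => by rw [AlgEquiv.coe_pow]; exact hτW.iterate k haW
  exact ⟨_, g, hne, hg⟩

theorem sum_mul_pow_apply_div_eq_zero {L : Type*} [Field L] [Algebra K L] {ι : Type*}
    [Fintype ι] {τ : L ≃ₐ[K] L} {B : L} {c : K} (hc : c ≠ 0) (hB : τ B = c • B) (k : ι → ℕ)
    {g : ι → L} {a : L} (hg : ∑ i, g i * (τ ^ k i) a = 0) :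
    ∑ i, g i * algebraMap K L c ^ k i * (τ ^ k i) (a / B) = 0 := by
  have hc' : ∀ j, algebraMap K L c ^ j ≠ 0 := fun j => pow_ne_zero _ ((map_ne_zero _).mpr hc)
  simp_rw [map_div₀, AlgEquiv.pow_apply_of_apply_eq_smul hB, Algebra.smul_def, map_pow]
  calc ∑ i, g i * algebraMap K L c ^ k i * ((τ ^ k i) a / (algebraMap K L c ^ k i * B))
      = ∑ i, g i * (τ ^ k i) a / B := Finset.sum_congr rfl fun i _ => by
        rw [mul_assoc, mul_div_assoc', mul_div_mul_left _ _ (hc' _), mul_div_assoc]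
    _ = 0 := by rw [← Finset.sum_div, hg, zero_div]

variable {σx σy : F3 K ≃ₐ[K] F3 K} {Dz : Derivation K (F3 K) (F3 K)}

theorem exactΔyDz_sum_zpow_apply {ι : Type*} [Fintype ι] (j : ι → ℤ) {w : ι → F3 K}
    (hw : ∑ i, w i = 0) : ExactΔyDz K σy Dz (∑ i, (σy ^ j i) (w i)) := by
  choose g hg using fun i => σy.exists_zpow_apply_sub_eq (w i) (j i)
  refine ⟨∑ i, g i, 0, ?_⟩
  rw [map_zero, add_zero, map_sum, ← Finset.sum_sub_distrib, ← sub_zero (∑ i, _), ← hw,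
    ← Finset.sum_sub_distrib]
  exact Finset.sum_congr rfl fun i _ => hg i

theorem exactΔyDz_sum_of_sum_eq_zero {ι : Type*} [Fintype ι] {τ : F3 K ≃ₐ[K] F3 K} {n : ℤ}
    (hτ : Commute (σy ^ n) τ) {e : ι → F3 K} (he : ∀ i, σy (e i) = e i) (k : ι → ℕ)
    {f : F3 K} (h0 : ∑ i, e i * (τ ^ k i) f = 0) :
    ExactΔyDz K σy Dz (∑ i, e i * ((σy ^ n * τ) ^ k i) f) := by
  have hshift : ∀ i, e i * ((σy ^ n * τ) ^ k i) f = (σy ^ (n * k i)) (e i * (τ ^ k i) f) := by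
    intro i
    rw [map_mul, AlgEquiv.zpow_apply_of_apply_eq_self (he i), zpow_mul, zpow_natCast,
      hτ.mul_pow, AlgEquiv.mul_apply]
  simp_rw [hshift]
  exact exactΔyDz_sum_zpow_apply _ h0

theorem hasTelescoperSxΔyDz_of_injective {ι : Type*} [Fintype ι] {ν : ι → ℕ}
    (hν : Function.Injective ν) {f : F3 K} {e : ι → F3 K} (he : ∀ i, e i ∈ K⟮xv K⟯)
    (hne : ∃ i, e i ≠ 0) (hexact : ExactΔyDz K σy Dz (∑ i, e i * (σx ^ ν i) f)) :
    HasTelescoperSxΔyDz K σx σy Dz f := by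
  classical
  have hν_lt : ∀ i, ν i < Finset.univ.sup ν + 1 :=
    fun i => Nat.lt_succ_of_le (Finset.le_sup (Finset.mem_univ i))
  let coeff : ℕ → F3 K := fun t => ∑ i, if ν i = t then e i else 0
  refine ⟨Finset.univ.sup ν, fun t => coeff t, fun t => sum_mem fun i _ => ?_, ?_, ?_⟩
  · split_ifs
    exacts [he i, zero_mem _]
  · obtain ⟨i, hi⟩ := hne
    exact ⟨⟨ν i, hν_lt i⟩, by simpa [coeff, hν.eq_iff] using hi⟩
  · obtain ⟨g, h, hgh⟩ := hexact
    refine ⟨g, h, ?_⟩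
    rw [← hgh, Fin.sum_univ_eq_sum_range (fun t => coeff t * (σx ^ t) f)]
    simp only [coeff, Finset.sum_mul, ite_mul, zero_mul]
    rw [Finset.sum_comm]
    simp [hν_lt]

end Telescoper

theorem hasTelescoperSxΔyDz_of_shift_invariant_denominator_general
    (K : Type*) [Field K]
    (σx σy : F3 K ≃ₐ[K] F3 K)
    (hσx1 : σx (xv K) = xv K + 1) (hσx2 : σx (yv K) = yv K) (hσx3 : σx (zv K) = zv K)
    (hσy1 : σy (xv K) = xv K) (hσy2 : σy (yv K) = yv K + 1) (hσy3 : σy (zv K) = zv K)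
    (Dz : Derivation K (F3 K) (F3 K))
    (a : F3 K)
    (ha : ∃ p q : MvPolynomial (Fin 3) K, q ≠ 0 ∧
      q ∈ MvPolynomial.supported K ({0} : Set (Fin 3)) ∧ a = toF3 K p / toF3 K q)
    (b : MvPolynomial (Fin 3) K)
    (c : K) (hc : c ≠ 0) (m n : ℤ) (hm : 0 < m)
    (hshift : (σx ^ m) (toF3 K b) = c • (σy ^ n) (toF3 K b)) :
    HasTelescoperSxΔyDz K σx σy Dz (a / toF3 K b) := by
  obtain ⟨p, q, -, hq, rfl⟩ := ha
  lift m to ℕ using hm.le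
  rw [zpow_natCast] at hshift
  obtain ⟨τ, hστ, hcomm, hτx, hτy, hτz⟩ :=
    exists_zpow_mul_of_shifts hσx1 hσx2 hσx3 hσy1 hσy2 hσy3 m n
  have hτb : τ (toF3 K b) = c • toF3 K b :=
    (σy ^ n).injective <| by rw [map_smul, ← AlgEquiv.mul_apply, ← hστ, hshift]
  have hτx' : τ (xv K) ∈ K⟮xv K⟯ := by
    rw [hτx]; exact add_mem (mem_adjoin_simple_self K _) (IntermediateField.natCast_mem _ m)
  have hτy' : τ (yv K) - yv K ∈ K⟮xv K⟯ := by
    rw [hτy, sub_sub_cancel_left]; exact neg_mem (IntermediateField.intCast_mem _ n)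
  obtain ⟨N, g, ⟨k, hk⟩, hg⟩ := exists_nontrivial_relation_pow_apply hτx' hτy' hτz p hq
  have he : ∀ k, (g k : F3 K) * algebraMap K (F3 K) c ^ (k : ℕ) ∈ K⟮xv K⟯ :=
    fun k => mul_mem (g k).2 (pow_mem (IntermediateField.algebraMap_mem _ c) _)
  refine hasTelescoperSxΔyDz_of_injective (ν := fun k : Fin (N + 1) => m * k)
    ((mul_right_injective₀ (Int.natCast_pos.mp hm).ne').comp Fin.val_injective) he
    ⟨k, mul_ne_zero (by exact_mod_cast hk) (pow_ne_zero _ ((map_ne_zero _).mpr hc))⟩ ?_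
  simp_rw [pow_mul, hστ]
  exact exactΔyDz_sum_of_sum_eq_zero hcomm
    (fun k => AlgEquiv.apply_eq_self_of_mem_adjoin_simple hσy1 (he k)) _
    (sum_mul_pow_apply_div_eq_zero hc hτb _ hg)

/-- **Sufficiency: shift-invariant denominators give telescopers of type
`(S_x, Δ_y, D_z)`.**  Let `a ∈ K(x)[y,z]` (an element of `K(x,y,z)` that is a
quotient `p/q` with `q ∈ K[x] \ {0}`) and let `b ∈ K[x,y,z]` be nonzero with
`σ_x^m b = c • σ_y^n b` for some nonzero `c ∈ K` and integers `m > 0`, `n`.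
Then `a/b` has a telescoper of type `(S_x, Δ_y, D_z)`. -/
theorem hasTelescoperSxΔyDz_of_shift_invariant_denominator
    (K : Type*) [Field K] [CharZero K]
    (σx σy : F3 K ≃ₐ[K] F3 K)
    (hσx1 : σx (xv K) = xv K + 1) (hσx2 : σx (yv K) = yv K) (hσx3 : σx (zv K) = zv K)
    (hσy1 : σy (xv K) = xv K) (hσy2 : σy (yv K) = yv K + 1) (hσy3 : σy (zv K) = zv K)
    (Dz : Derivation K (F3 K) (F3 K))
    (hDz1 : Dz (xv K) = 0) (hDz2 : Dz (yv K) = 0) (hDz3 : Dz (zv K) = 1)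
    (a : F3 K)
    (ha : ∃ p q : MvPolynomial (Fin 3) K, q ≠ 0 ∧
      q ∈ MvPolynomial.supported K ({0} : Set (Fin 3)) ∧ a = toF3 K p / toF3 K q)
    (b : MvPolynomial (Fin 3) K) (hb : b ≠ 0)
    (c : K) (hc : c ≠ 0) (m n : ℤ) (hm : 0 < m)
    (hshift : (σx ^ m) (toF3 K b) = c • (σy ^ n) (toF3 K b)) :
    HasTelescoperSxΔyDz K σx σy Dz (a / toF3 K b) :=
  hasTelescoperSxΔyDz_of_shift_invariant_denominator_general K σx σy hσx1 hσx2 hσx3 hσy1 hσy2 hσy3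
    Dz a ha b c hc m n hm hshift
end
end
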